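/- Let G be a P5-free graph, let v ∈ V(G), let A ⊆ N_G(v), and let B ⊆ V(G) \ N_G[v]. Suppose the vertices of A are ordered v_1, …, v_s greedily so that for each j, v_{j+1} maximizes the chromatic number of its nonneighbourhood inside ⋂_{i≤j} N_G(v_i) ∩ B among all remaining vertices of A. For j ∈ [s], set E_j := (⋂_{i<j} N_G(v_i) ∩ B) \ N_G(v_j), and for each i let B_i ⊆ E_i induce a maximal-chromatic connected component of G[E_i]. Then for all i < j, the pair (B_i, B_j) is pure, i.e., B_i is complete or anticomplete to B_j and vice versa; in fact B_j is pure to B_i and B_i is pure to B_j. -/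

import Mathlib

open SimpleGraph

/-- The chromatic number of the subgraph of `G` induced on `S`, as a natural number. -/
noncomputable def chiS {V : Type*} [Fintype V] (G : SimpleGraph V) (S : Set V) : ℕ :=
  (G.induce S).chromaticNumber.toNat

/-- A graph is `P5`-free if it has no induced subgraph isomorphic to the five-vertex path. -/
def P5Free {V : Type*} (G : SimpleGraph V) : Prop :=
  IsEmpty (SimpleGraph.pathGraph 5 ↪g G)

/-!
Both halves come from induced `P5`s ending in `v`. For `i < j` we have `B_j ⊆ N(v_i)`, and each
`B_k` is anticomplete to `v` and to `v_k`. If `b ∈ B_j` were mixed on the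
connected set `B_i`, an edge `xy` of `B_i` with `b ~ x`, `b ≁ y` would give the induced path
`y - x - b - v_i - v`. If `a ∈ B_i` were mixed on `B_j`, say `a ~ b` and `a ≁ b'`, then by the first
half `b` is complete and `b'` anticomplete to `B_i`. Since `v_i` was preferred to `v_j` by the greedy
rule, `B_i ∪ {b}`, whose chromatic number exceeds that of `E_i`, cannot avoid `N(v_j)`; so some
`x ∈ B_i` sees `v_j`, and the first argument with `x, v_j` in place of `b, v_i` makes `x` pure to
`B_j`, contradicting `x ~ b`, `x ≁ b'`.
-/

section

variable {V : Type*} {G : SimpleGraph V}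

lemma P5Free.not_induced_path (hG : P5Free G) {a b c d e : V}
    (hab : G.Adj a b) (hbc : G.Adj b c) (hcd : G.Adj c d) (hde : G.Adj d e)
    (hac : ¬ G.Adj a c) (had : ¬ G.Adj a d) (hae : ¬ G.Adj a e)
    (hbd : ¬ G.Adj b d) (hbe : ¬ G.Adj b e) (hce : ¬ G.Adj c e) : False := by
  let f : Fin 5 → V := ![a, b, c, d, e]
  have hf : ∀ x y, G.Adj (f x) (f y) ↔ (pathGraph 5).Adj x y := by
    have := hab.symm; have := hbc.symm; have := hcd.symm; have := hde.symm
    have : ¬ G.Adj c a := fun h => hac h.symm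
    have : ¬ G.Adj d a := fun h => had h.symm
    have : ¬ G.Adj e a := fun h => hae h.symm
    have : ¬ G.Adj d b := fun h => hbd h.symm
    have : ¬ G.Adj e b := fun h => hbe h.symm
    have : ¬ G.Adj e c := fun h => hce h.symm
    intro x y
    fin_cases x <;> fin_cases y <;> simp [f, pathGraph_adj, *]
  -- the five vertices of `P5` have pairwise distinct neighbourhoods
  have hP5 : ∀ x y : Fin 5, (∀ z, (pathGraph 5).Adj z x ↔ (pathGraph 5).Adj z y) → x = y := by
    simp only [pathGraph_adj]; decide
  refine hG.false ⟨⟨f, fun x y hxy => hP5 x y fun z => ?_⟩, hf _ _⟩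
  rw [← hf, ← hf, hxy]

namespace SimpleGraph

def IsPureTo (G : SimpleGraph V) (w : V) (S : Set V) : Prop :=
  (∀ x ∈ S, G.Adj w x) ∨ (∀ x ∈ S, ¬ G.Adj w x)

lemma isPureTo_iff_forall_adj_imp {w : V} {S : Set V} :
    G.IsPureTo w S ↔ ∀ x ∈ S, ∀ y ∈ S, G.Adj w x → G.Adj w y := by
  unfold IsPureTo
  grind

lemma IsPureTo.adj_of_adj {w x y : V} {S : Set V} (h : G.IsPureTo w S) (hx : x ∈ S)
    (hy : y ∈ S) (hwx : G.Adj w x) : G.Adj w y :=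
  isPureTo_iff_forall_adj_imp.mp h x hx y hy hwx

lemma isPureTo_of_connected {w : V} {S : Set V} (hS : (G.induce S).Connected)
    (h : ∀ x ∈ S, ∀ y ∈ S, G.Adj x y → G.Adj w x → G.Adj w y) : G.IsPureTo w S := by
  refine isPureTo_iff_forall_adj_imp.mpr fun x hx y hy hwx => by_contra fun hwy => ?_
  obtain ⟨p⟩ := hS.preconnected ⟨x, hx⟩ ⟨y, hy⟩
  obtain ⟨d, -, hd₁, hd₂⟩ := p.exists_boundary_dart {z | G.Adj w z} hwx hwy
  exact hd₂ (h _ d.fst.2 _ d.snd.2 d.adj hd₁)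

end SimpleGraph

lemma P5Free.isPureTo_of_anticomplete (hG : P5Free G) {S : Set V}
    (hS : (G.induce S).Connected) {c d e : V} (hcd : G.Adj c d) (hde : G.Adj d e)
    (hce : ¬ G.Adj c e) (hSd : ∀ x ∈ S, ¬ G.Adj x d) (hSe : ∀ x ∈ S, ¬ G.Adj x e) :
    G.IsPureTo c S :=
  isPureTo_of_connected hS fun x hx y hy hxy hcx => by_contra fun hcy =>
    hG.not_induced_path hxy.symm hcx.symm hcd hde (fun h => hcy h.symm) (hSd y hy) (hSe y hy)
      (hSd x hx) (hSe x hx) hce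

section chiS

variable [Fintype V]

lemma chiS_le_iff_colorable {S : Set V} {n : ℕ} : chiS G S ≤ n ↔ (G.induce S).Colorable n := by
  have hfin : (G.induce S).chromaticNumber ≠ ⊤ :=
    chromaticNumber_ne_top_iff_exists.mpr ⟨_, (G.induce S).colorable_chromaticNumber_of_fintype⟩
  rw [← chromaticNumber_le_iff_colorable, ← ENat.natCast_toNat hfin, Nat.cast_le, chiS]

lemma colorable_chiS (S : Set V) : (G.induce S).Colorable (chiS G S) :=
  chiS_le_iff_colorable.mp le_rfl

lemma chiS_mono {S T : Set V} (h : S ⊆ T) : chiS G S ≤ chiS G T :=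
  chiS_le_iff_colorable.mpr ((colorable_chiS T).of_hom (G.induceHomOfLE h).toHom)

lemma chiS_add_one_le_of_forall_adj {S : Set V} {b : V} (hb : ∀ x ∈ S, G.Adj b x) :
    chiS G S + 1 ≤ chiS G (insert b S) := by
  obtain ⟨c⟩ := colorable_chiS (G := G) (insert b S)
  set cb := c ⟨b, S.mem_insert b⟩
  -- restricting `c` to `S` avoids the colour of `b`
  let c' : (G.induce S).Coloring {k // k ≠ cb} :=
    Coloring.mk (fun x => ⟨c ⟨x, Set.mem_insert_of_mem b x.2⟩, c.valid (hb x x.2).symm⟩)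
      fun {x y} hxy heq => c.valid (v := ⟨x, Set.mem_insert_of_mem b x.2⟩)
        (w := ⟨y, Set.mem_insert_of_mem b y.2⟩) hxy (congrArg Subtype.val heq)
  have hS : chiS G S ≤ chiS G (insert b S) - 1 := by
    simpa [Fintype.card_subtype_compl] using chiS_le_iff_colorable.mpr c'.colorable
  have hpos : 0 < chiS G (insert b S) := cb.pos
  omega

lemma exists_adj_of_chiS_sdiff_le {S F : Set V} {b w : V}
    (hF : chiS G (F \ G.neighborSet w) ≤ chiS G S) (hSF : S ⊆ F) (hbF : b ∈ F)
    (hwb : ¬ G.Adj w b) (hbS : ∀ x ∈ S, G.Adj b x) : ∃ x ∈ S, G.Adj w x := by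
  by_contra! hSw
  have hsub : insert b S ⊆ F \ G.neighborSet w :=
    Set.insert_subset ⟨hbF, hwb⟩ fun x hx => ⟨hSF hx, hSw x hx⟩
  have := (chiS_add_one_le_of_forall_adj hbS).trans (chiS_mono hsub)
  omega

end chiS

namespace SimpleGraph

variable {s : ℕ}

def commonNeighborsBefore (G : SimpleGraph V) (vs : Fin s → V) (j : Fin s) : Set V :=
  ⋂ i : {i : Fin s // i < j}, G.neighborSet (vs i.1)

lemma commonNeighborsBefore_subset_neighborSet {vs : Fin s → V} {i j : Fin s} (hij : i < j) :
    G.commonNeighborsBefore vs j ⊆ G.neighborSet (vs i) :=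
  Set.iInter_subset_of_subset ⟨i, hij⟩ subset_rfl

lemma commonNeighborsBefore_anti {vs : Fin s → V} {i j : Fin s} (hij : i ≤ j) :
    G.commonNeighborsBefore vs j ⊆ G.commonNeighborsBefore vs i :=
  Set.subset_iInter fun k => commonNeighborsBefore_subset_neighborSet (k.2.trans_le hij)

end SimpleGraph

end

theorem stmt_8_general {V : Type*} [Fintype V] (G : SimpleGraph V) (hP5 : P5Free G)
    (v : V) (A B : Set V)
    (hA : A ⊆ G.neighborSet v) (hB : B ⊆ (insert v (G.neighborSet v))ᶜ)
    (s : ℕ) (vs : Fin s → V) (hinj : Function.Injective vs)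
    (hrange : Set.range vs = A)
    -- greedy choice: `vs j` maximizes the chromatic number of its nonneighbourhood
    -- inside `⋂_{i<j} N(vs i) ∩ B` among all remaining vertices of `A`
    (hgreedy : ∀ j : Fin s, ∀ u ∈ A, (∀ i : Fin s, i < j → u ≠ vs i) →
      chiS G (((⋂ i : {i : Fin s // i < j}, G.neighborSet (vs i.1)) ∩ B) \ G.neighborSet u)
        ≤ chiS G (((⋂ i : {i : Fin s // i < j}, G.neighborSet (vs i.1)) ∩ B) \
            G.neighborSet (vs j)))
    (E : Fin s → Set V)
    (hE : ∀ j : Fin s,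
      E j = ((⋂ i : {i : Fin s // i < j}, G.neighborSet (vs i.1)) ∩ B) \ G.neighborSet (vs j))
    (Bs : Fin s → Set V)
    (hBsub : ∀ i, Bs i ⊆ E i)
    (hBconn : ∀ i, (G.induce (Bs i)).Connected)
    (hBmax : ∀ i, chiS G (Bs i) = chiS G (E i)) :
    ∀ i j : Fin s, i < j →
      (∀ b ∈ Bs j, (∀ a ∈ Bs i, G.Adj b a) ∨ (∀ a ∈ Bs i, ¬ G.Adj b a)) ∧
      (∀ a ∈ Bs i, (∀ b ∈ Bs j, G.Adj a b) ∨ (∀ b ∈ Bs j, ¬ G.Adj a b)) := by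
  intro i j hij
  obtain rfl : E = fun k => (G.commonNeighborsBefore vs k ∩ B) \ G.neighborSet (vs k) :=
    funext hE
  have hvsA (k : Fin s) : vs k ∈ A := hrange ▸ Set.mem_range_self k
  have hvA (k : Fin s) : G.Adj v (vs k) := hA (hvsA k)
  have hBsv (k : Fin s) : ∀ x ∈ Bs k, ¬ G.Adj x v := fun x hx h =>
    hB (hBsub k hx).1.2 (Set.mem_insert_of_mem v h.symm)
  have hBsvs (k : Fin s) : ∀ x ∈ Bs k, ¬ G.Adj x (vs k) := fun x hx h => (hBsub k hx).2 h.symm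
  have hBjvi : ∀ x ∈ Bs j, G.Adj x (vs i) := fun x hx =>
    (commonNeighborsBefore_subset_neighborSet hij (hBsub j hx).1.1).symm
  have hpure_j : ∀ b ∈ Bs j, G.IsPureTo b (Bs i) := fun b hb =>
    hP5.isPureTo_of_anticomplete (hBconn i) (hBjvi b hb) (hvA i).symm (hBsv j b hb)
      (hBsvs i) (hBsv i)
  refine ⟨hpure_j, fun a ha => isPureTo_iff_forall_adj_imp.mpr fun b hb b' hb' hab =>
    by_contra fun hab' => ?_⟩
  have hbBi : ∀ x ∈ Bs i, G.Adj b x := fun x hx => (hpure_j b hb).adj_of_adj ha hx hab.symm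
  obtain ⟨x, hx, hjx⟩ : ∃ x ∈ Bs i, G.Adj (vs j) x := by
    refine exists_adj_of_chiS_sdiff_le ?_ (fun y hy => (hBsub i hy).1)
      ⟨commonNeighborsBefore_anti hij.le (hBsub j hb).1.1, (hBsub j hb).1.2⟩
      (hBsub j hb).2 hbBi
    refine (hgreedy i (vs j) (hvsA j) fun k hk h => ?_).trans (hBmax i).ge
    exact (hk.trans hij).ne (hinj h).symm
  have hpure_x := hP5.isPureTo_of_anticomplete (hBconn j) hjx.symm (hvA j).symm (hBsv i x hx)
    (hBsvs j) (hBsv j)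
  have hxb' : G.Adj x b' := hpure_x.adj_of_adj hb hb' (hbBi x hx).symm
  exact hab' ((hpure_j b' hb').adj_of_adj hx ha hxb'.symm).symm

theorem stmt_8 {V : Type*} [Fintype V] (G : SimpleGraph V) (hP5 : P5Free G)
    (v : V) (A B : Set V)
    (hA : A ⊆ G.neighborSet v) (hB : B ⊆ (insert v (G.neighborSet v))ᶜ)
    (s : ℕ) (vs : Fin s → V) (hinj : Function.Injective vs)
    (hrange : Set.range vs = A)
    -- greedy choice: `vs j` maximizes the chromatic number of its nonneighbourhood
    -- inside `⋂_{i<j} N(vs i) ∩ B` among all remaining vertices of `A`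
    (hgreedy : ∀ j : Fin s, ∀ u ∈ A, (∀ i : Fin s, i < j → u ≠ vs i) →
      chiS G (((⋂ i : {i : Fin s // i < j}, G.neighborSet (vs i.1)) ∩ B) \ G.neighborSet u)
        ≤ chiS G (((⋂ i : {i : Fin s // i < j}, G.neighborSet (vs i.1)) ∩ B) \
            G.neighborSet (vs j)))
    (E : Fin s → Set V)
    (hE : ∀ j : Fin s,
      E j = ((⋂ i : {i : Fin s // i < j}, G.neighborSet (vs i.1)) ∩ B) \ G.neighborSet (vs j))
    (Bs : Fin s → Set V)
    (hBsub : ∀ i, Bs i ⊆ E i)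
    (hBconn : ∀ i, (G.induce (Bs i)).Connected)
    (hBcomp : ∀ i, ∀ a ∈ Bs i, ∀ b ∈ E i \ Bs i, ¬ G.Adj a b)
    (hBmax : ∀ i, chiS G (Bs i) = chiS G (E i)) :
    ∀ i j : Fin s, i < j →
      (∀ b ∈ Bs j, (∀ a ∈ Bs i, G.Adj b a) ∨ (∀ a ∈ Bs i, ¬ G.Adj b a)) ∧
      (∀ a ∈ Bs i, (∀ b ∈ Bs j, G.Adj a b) ∨ (∀ b ∈ Bs j, ¬ G.Adj a b)) :=
  stmt_8_general G hP5 v A B hA hB s vs hinj hrange hgreedy E hE Bs hBsub hBconn hBmax
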